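/- For all n > 0 and all k with 0 ≤ k ≤ n, any two successive bit-strings w and w' in the list C(n,k) differ in exactly two positions; at one of these positions w has a 1 and w' has a 0, and at the other w has a 0 and w' has a 1 (i.e. successive elements are related by a transposition of a one and a zero). -/

import Mathlib

/-- The recursively defined list `C(n,k)` of bit-strings of length `n`:
`C(n,0) = [0^n]`, `C(n,n) = [1^n]`, and for `0 < k < n`, `C(n,k)` is the list
`C(n-1,k)` with the bit `0` appended at the right end of each string, followed by the
reversal of the list `C(n-1,k-1)` with the bit `1` appended at the right end of each
string.  Bits are booleans: `true = 1`, `false = 0`. -/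
def C : ℕ → ℕ → List (List Bool)
  | n, 0 => [List.replicate n false]
  | 0, _ + 1 => []
  | n + 1, k + 1 =>
      if n = k then [List.replicate (n + 1) true]
      else
        ((C n (k + 1)).map fun w => w ++ [false]) ++
          ((C n k).reverse.map fun w => w ++ [true])

lemma mem_of_getElem?' {α : Type*} {l : List α} {a : α} {n : ℕ} (h : l[n]? = some a) : a ∈ l := by
  obtain ⟨h1, rfl⟩ := List.getElem?_eq_some_iff.mp h
  exact List.getElem_mem h1

lemma C_eq_nil : ∀ n k, n < k → C n k = [] := by
  intro n
  induction n with
  | zero =>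
    intro k hk
    match k, hk with
    | k + 1, _ => rfl
  | succ n ih =>
    intro k hk
    match k, hk with
    | k + 1, hk =>
      rw [C]
      split
      · omega
      · simp [ih (k + 1) (by omega), ih k (by omega)]

lemma C_length : ∀ n k, ∀ w ∈ C n k, w.length = n := by
  intro n
  induction n with
  | zero =>
    intro k w hw
    match k with
    | 0 => simp [C] at hw; simp [hw]
    | k + 1 => simp [C] at hw
  | succ n ih =>
    intro k w hw
    match k with
    | 0 => simp [C] at hw; simp [hw]
    | k + 1 =>
      rw [C] at hw
      split at hw
      · simp at hw; simp [hw]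
      · simp at hw
        rcases hw with ⟨u, hu, rfl⟩ | ⟨u, hu, rfl⟩ <;> simp [ih _ _ hu]

lemma C_ne_nil : ∀ n k, k ≤ n → C n k ≠ [] := by
  intro n
  induction n with
  | zero => intro k hk; interval_cases k; simp [C]
  | succ n ih =>
    intro k hk
    match k with
    | 0 => simp [C]
    | k + 1 =>
      rw [C]
      split
      · simp
      · next h =>
        exact List.append_ne_nil_of_left_ne_nil
          (by simpa using ih (k + 1) (by omega)) _

lemma C_head : ∀ n k, k ≤ n →
    (C n k).head? = some (List.replicate k true ++ List.replicate (n - k) false) := by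
  intro n
  induction n with
  | zero => intro k hk; interval_cases k; simp [C]
  | succ n ih =>
    intro k hk
    match k with
    | 0 => simp [C]
    | k + 1 =>
      rw [C]
      split
      · next h => subst h; simp
      · next h =>
        have h1 : k + 1 ≤ n := by omega
        rw [List.head?_append_of_ne_nil _ (by simpa using C_ne_nil n (k+1) h1)]
        rw [List.head?_map, ih (k + 1) h1]
        have : n + 1 - (k + 1) = (n - (k + 1)) + 1 := by omega
        simp [this, List.replicate_succ', List.append_assoc]

lemma C_last : ∀ n k, k + 1 ≤ n →
    (C n (k + 1)).getLast? =
      some (List.replicate k true ++ (List.replicate (n - 1 - k) false ++ [true])) := by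
  intro n k hk
  match n with
  | 0 => omega
  | m + 1 =>
    rw [C]
    split
    · next h =>
      subst h
      simp [List.replicate_succ']
    · next h =>
      have h1 : k ≤ m := by omega
      rw [List.getLast?_append, List.getLast?_map, List.getLast?_reverse, C_head m k h1]
      have : m + 1 - 1 - k = m - k := by omega
      simp [this, List.append_assoc]

lemma two_diff (pre mid : List Bool) :
    ∃ p q, p < (pre ++ true :: (mid ++ [false])).length ∧
      q < (pre ++ true :: (mid ++ [false])).length ∧ p ≠ q ∧
      (pre ++ true :: (mid ++ [false]))[p]? = some true ∧
      (pre ++ false :: (mid ++ [true]))[p]? = some false ∧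
      (pre ++ true :: (mid ++ [false]))[q]? = some false ∧
      (pre ++ false :: (mid ++ [true]))[q]? = some true ∧
      ∀ r, r ≠ p → r ≠ q →
        (pre ++ true :: (mid ++ [false]))[r]? = (pre ++ false :: (mid ++ [true]))[r]? := by
  set a := pre.length with ha
  set m := mid.length with hm
  refine ⟨a, a + m + 1, by simp only [List.length_append, List.length_cons]; omega, by simp only [List.length_append, List.length_cons]; omega, by omega, ?_, ?_, ?_, ?_, ?_⟩
  · rw [List.getElem?_append_right (le_refl a)]
    simp [ha]
  · rw [List.getElem?_append_right (le_refl a)]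
    simp [ha]
  · rw [List.getElem?_append_right (by omega)]
    have : a + m + 1 - a = m + 1 := by omega
    rw [this]
    simp [List.getElem?_cons, List.getElem?_append_right (le_refl m), hm]
  · rw [List.getElem?_append_right (by omega)]
    have : a + m + 1 - a = m + 1 := by omega
    rw [this]
    simp [List.getElem?_cons, List.getElem?_append_right (le_refl m), hm]
  · intro r hr1 hr2
    rcases lt_or_ge r a with h | h
    · rw [List.getElem?_append_left (by simpa using h), List.getElem?_append_left (by simpa using h)]
    · rw [List.getElem?_append_right h, List.getElem?_append_right h]
      have hr : r - a ≠ 0 := by omega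
      obtain ⟨s, hs⟩ : ∃ s, r - a = s + 1 := ⟨r - a - 1, by omega⟩
      rw [hs]
      simp only [List.getElem?_cons_succ]
      rcases lt_or_ge s m with h2 | h2
      · rw [List.getElem?_append_left (by simpa using h2), List.getElem?_append_left (by simpa using h2)]
      · have h3 : s ≠ m := by omega
        rw [List.getElem?_eq_none (by simp; omega), List.getElem?_eq_none (by simp; omega)]

lemma extend_bit {n : ℕ} {w w' : List Bool} (hwl : w.length = n) (hwl' : w'.length = n) (b : Bool)
    (h : ∃ p q, p < n ∧ q < n ∧ p ≠ q ∧
      w[p]? = some true ∧ w'[p]? = some false ∧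
      w[q]? = some false ∧ w'[q]? = some true ∧
      ∀ r, r ≠ p → r ≠ q → w[r]? = w'[r]?) :
    ∃ p q, p < n + 1 ∧ q < n + 1 ∧ p ≠ q ∧
      (w ++ [b])[p]? = some true ∧ (w' ++ [b])[p]? = some false ∧
      (w ++ [b])[q]? = some false ∧ (w' ++ [b])[q]? = some true ∧
      ∀ r, r ≠ p → r ≠ q → (w ++ [b])[r]? = (w' ++ [b])[r]? := by
  obtain ⟨p, q, hp, hq, hpq, h1, h2, h3, h4, h5⟩ := h
  refine ⟨p, q, by omega, by omega, hpq, ?_, ?_, ?_, ?_, ?_⟩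
  · rw [List.getElem?_append_left (by omega)]; exact h1
  · rw [List.getElem?_append_left (by omega)]; exact h2
  · rw [List.getElem?_append_left (by omega)]; exact h3
  · rw [List.getElem?_append_left (by omega)]; exact h4
  · intro r hr1 hr2
    rcases lt_or_ge r n with h | h
    · rw [List.getElem?_append_left (by omega), List.getElem?_append_left (by omega)]
      exact h5 r hr1 hr2
    · rw [List.getElem?_append_right (by omega), List.getElem?_append_right (by omega)]
      rw [hwl, hwl']

lemma main_aux : ∀ n k (t : ℕ) (w w' : List Bool),
    (C n k)[t]? = some w → (C n k)[t + 1]? = some w' →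
    ∃ p q, p < n ∧ q < n ∧ p ≠ q ∧
      w[p]? = some true ∧ w'[p]? = some false ∧
      w[q]? = some false ∧ w'[q]? = some true ∧
      ∀ r, r ≠ p → r ≠ q → w[r]? = w'[r]? := by
  intro n
  induction n with
  | zero =>
    intro k t w w' hw hw'
    match k with
    | 0 => rw [List.getElem?_eq_none (by simp [C])] at hw'; exact absurd hw' (by simp)
    | k + 1 => simp [C] at hw
  | succ n ih =>
    intro k t w w' hw hw'
    match k with
    | 0 => rw [List.getElem?_eq_none (by simp [C])] at hw'; exact absurd hw' (by simp)
    | k + 1 =>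
      rw [C] at hw hw'
      by_cases hnk : n = k
      · rw [if_pos hnk] at hw'
        rw [List.getElem?_eq_none (by simp)] at hw'
        exact absurd hw' (by simp)
      · rw [if_neg hnk] at hw hw'
        have hk1 : k + 1 ≤ n := by
          by_contra hc
          rw [C_eq_nil n (k + 1) (by omega), C_eq_nil n k (by omega)] at hw
          simp at hw
        set l1 := C n (k + 1) with hl1
        set l2 := C n k with hl2
        set A := l1.map (fun w => w ++ [false]) with hA
        set B := l2.reverse.map (fun w => w ++ [true]) with hB
        have hAlen : A.length = l1.length := by simp [hA]
        rcases lt_trichotomy (t + 1) A.length with hcase | hcase | hcase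
        · -- both in A
          rw [List.getElem?_append_left (by omega)] at hw
          rw [List.getElem?_append_left hcase] at hw'
          rw [hA, List.getElem?_map] at hw hw'
          obtain ⟨u, hu, rfl⟩ : ∃ u, l1[t]? = some u ∧ w = u ++ [false] := by
            rcases h : l1[t]? with _ | u
            · rw [h] at hw; simp at hw
            · rw [h] at hw; simp at hw; exact ⟨u, rfl, hw.symm⟩
          obtain ⟨u', hu', rfl⟩ : ∃ u', l1[t+1]? = some u' ∧ w' = u' ++ [false] := by
            rcases h : l1[t+1]? with _ | u'
            · rw [h] at hw'; simp at hw'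
            · rw [h] at hw'; simp at hw'; exact ⟨u', rfl, hw'.symm⟩
          have hlu : u.length = n := C_length n (k+1) u (mem_of_getElem?' hu)
          have hlu' : u'.length = n := C_length n (k+1) u' (mem_of_getElem?' hu')
          exact extend_bit hlu hlu' false (ih (k + 1) t u u' hu hu')
        · -- boundary
          rw [List.getElem?_append_left (by omega)] at hw
          rw [hcase, List.getElem?_append_right (le_refl _), Nat.sub_self] at hw'
          obtain ⟨u, hu, hwe⟩ : ∃ u, l1.getLast? = some u ∧ w = u ++ [false] := by
            rw [hA, List.getElem?_map] at hw
            have ht : t = l1.length - 1 := by omega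
            rw [ht, ← List.getLast?_eq_getElem?] at hw
            rcases h : l1.getLast? with _ | u
            · rw [h] at hw; simp at hw
            · rw [h] at hw; simp at hw; exact ⟨u, rfl, hw.symm⟩
          obtain ⟨v, hv, hwe'⟩ : ∃ v, l2.getLast? = some v ∧ w' = v ++ [true] := by
            rw [hB, List.getElem?_map] at hw'
            have hne2 : l2 ≠ [] := C_ne_nil n k (by omega)
            have hrev : l2.reverse[0]? = l2.getLast? := by
              rw [List.getElem?_reverse (List.length_pos_iff.mpr hne2)]
              rw [Nat.sub_zero]
              exact (List.getLast?_eq_getElem? (l := l2)).symm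
            rw [hrev] at hw'
            rcases h : l2.getLast? with _ | v
            · rw [h] at hw'; simp at hw'
            · rw [h] at hw'; simp at hw'; exact ⟨v, rfl, hw'.symm⟩
          rw [hl1, C_last n k hk1] at hu
          have hu' : u = List.replicate k true ++ (List.replicate (n - 1 - k) false ++ [true]) := by
            injection hu with hu; exact hu.symm
          match k with
          | 0 =>
            rw [hl2] at hv
            have hv0 : (C n 0).getLast? = some (List.replicate n false) := by simp [C]
            rw [hv0] at hv
            have hv' : v = List.replicate n false := by injection hv with hv; exact hv.symm
            -- w = replicate (n-1) false ++ [true] ++ [false]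
            -- w' = replicate n false ++ [true]
            have hwform : w = List.replicate (n - 1) false ++ (true :: ([] ++ [false])) := by
              rw [hwe, hu']; simp
            have hw'form : w' = List.replicate (n - 1) false ++ (false :: ([] ++ [true])) := by
              rw [hwe', hv']
              have : n = (n - 1) + 1 := by omega
              rw [this, List.replicate_succ']
              simp
            rw [hwform, hw'form]
            obtain ⟨p, q, h1, h2, h3, h4, h5, h6, h7, h8⟩ :=
              two_diff (List.replicate (n - 1) false) []
            have hlen : (List.replicate (n - 1) false ++ (true : Bool) :: ([] ++ [false])).length = n + 1 := by
              simp; omega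
            rw [hlen] at h1 h2
            exact ⟨p, q, h1, h2, h3, h4, h5, h6, h7, h8⟩
          | j + 1 =>
            rw [hl2, C_last n j (by omega)] at hv
            have hv' : v = List.replicate j true ++ (List.replicate (n - 1 - j) false ++ [true]) := by
              injection hv with hv; exact hv.symm
            have hwform : w = List.replicate j true ++
                (true :: ((List.replicate (n - 1 - (j+1)) false ++ [true]) ++ [false])) := by
              rw [hwe, hu', List.replicate_succ']
              simp
            have hw'form : w' = List.replicate j true ++
                (false :: ((List.replicate (n - 1 - (j+1)) false ++ [true]) ++ [true])) := by
              rw [hwe', hv']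
              have : n - 1 - j = (n - 1 - (j + 1)) + 1 := by omega
              rw [this, List.replicate_succ]
              simp
            rw [hwform, hw'form]
            obtain ⟨p, q, h1, h2, h3, h4, h5, h6, h7, h8⟩ :=
              two_diff (List.replicate j true) (List.replicate (n - 1 - (j+1)) false ++ [true])
            have hlen : (List.replicate j true ++
                (true : Bool) :: ((List.replicate (n - 1 - (j+1)) false ++ [true]) ++ [false])).length = n + 1 := by
              simp; omega
            rw [hlen] at h1 h2
            exact ⟨p, q, h1, h2, h3, h4, h5, h6, h7, h8⟩
        · -- both in B
          rw [List.getElem?_append_right (by omega)] at hw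
          rw [List.getElem?_append_right (by omega)] at hw'
          set i := t - A.length with hi
          have hi1 : t + 1 - A.length = i + 1 := by omega
          rw [hi1] at hw'
          rw [hB, List.getElem?_map] at hw hw'
          have hival : i + 1 < l2.length := by
            by_contra hc
            rw [List.getElem?_eq_none (by simp; omega)] at hw'
            simp at hw'
          rw [List.getElem?_reverse (by omega)] at hw
          rw [List.getElem?_reverse (by omega)] at hw'
          set m := l2.length - 1 - (i + 1) with hmm
          have hm1 : l2.length - 1 - i = m + 1 := by omega
          rw [hm1] at hw
          obtain ⟨v, hvv, rfl⟩ : ∃ v, l2[m+1]? = some v ∧ w = v ++ [true] := by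
            rcases h : l2[m+1]? with _ | v
            · rw [h] at hw; simp at hw
            · rw [h] at hw; simp at hw; exact ⟨v, rfl, hw.symm⟩
          obtain ⟨v', hvv', rfl⟩ : ∃ v', l2[m]? = some v' ∧ w' = v' ++ [true] := by
            rcases h : l2[m]? with _ | v'
            · rw [h] at hw'; simp at hw'
            · rw [h] at hw'; simp at hw'; exact ⟨v', rfl, hw'.symm⟩
          have hlv : v.length = n := C_length n k v (mem_of_getElem?' hvv)
          have hlv' : v'.length = n := C_length n k v' (mem_of_getElem?' hvv')
          obtain ⟨p, q, h1, h2, h3, h4, h5, h6, h7, h8⟩ := ih k m v' v hvv' hvv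
          exact extend_bit hlv hlv' true
            ⟨q, p, h2, h1, fun h => h3 h.symm, h7, h6, h5, h4,
              fun r hr1 hr2 => (h8 r hr2 hr1).symm⟩

/-- For all `n > 0` and `0 ≤ k ≤ n`, any two successive bit-strings `w`, `w'` in the list
`C(n,k)` differ in exactly two positions; at one of them `w` has a `1` and `w'` has a `0`,
and at the other `w` has a `0` and `w'` has a `1`.  (Positions numbered `0, …, n-1`.) -/
theorem stmt4 (n k : ℕ) (hn : 0 < n) (hk : k ≤ n) (t : ℕ) (w w' : List Bool)
    (hw : (C n k)[t]? = some w) (hw' : (C n k)[t + 1]? = some w') :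
    ∃ p q, p < n ∧ q < n ∧ p ≠ q ∧
      w[p]? = some true ∧ w'[p]? = some false ∧
      w[q]? = some false ∧ w'[q]? = some true ∧
      ∀ r, r ≠ p → r ≠ q → w[r]? = w'[r]? := by
  exact main_aux n k t w w' hw hw'
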